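/- On a rooted tree, the local upward contribution δ(u,·) is monotone with unit increments: for every non-root vertex u and every integer k ≥ 0, δ(u,k) ≤ δ(u,k+1) ≤ δ(u,k) + 1. -/

import Mathlib

open scoped Classical

/-- A finite tree rooted at `root`, with an explicit parent function. -/
structure SandpileTree (V : Type) [Fintype V] [DecidableEq V] where
  G : SimpleGraph V
  isTree : G.IsTree
  root : V
  parent : V → V
  parent_root : parent root = root
  parent_adj : ∀ v, v ≠ root → G.Adj v (parent v)
  parent_reaches_root : ∀ v, ∃ n, parent^[n] v = root

variable {V : Type} [Fintype V] [DecidableEq V]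

namespace SandpileTree

noncomputable def deg (T : SandpileTree V) (v : V) : ℕ := T.G.degree v

/-- The subtree of `u`: all vertices having `u` as an (iterated-parent) ancestor. -/
def subtree (T : SandpileTree V) (u : V) : Set V := {v | ∃ n, T.parent^[n] v = u}

noncomputable def children (T : SandpileTree V) (u : V) : Finset V :=
  Finset.univ.filter fun v => T.parent v = u ∧ v ≠ u

noncomputable def fire (T : SandpileTree V) (σ : V → ℕ) (u : V) : V → ℕ :=
  fun w => if w = u then σ u - T.deg u else if T.G.Adj u w then σ w + 1 else σ w

noncomputable def fireList (T : SandpileTree V) : (V → ℕ) → List V → (V → ℕ)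
  | σ, [] => σ
  | σ, v :: l => fireList T (fire T σ v) l

def ValidSeq (T : SandpileTree V) : (V → ℕ) → List V → Prop
  | _, [] => True
  | σ, v :: l => T.deg v ≤ σ v ∧ ValidSeq T (fire T σ v) l

/-- No vertex of `S` is full. -/
def LocalTerminal (T : SandpileTree V) (σ : V → ℕ) (S : Set V) : Prop :=
  ∀ v ∈ S, σ v < T.deg v

/-- The (unique, order-independent) configuration obtained from `σ` by firing full
vertices of `subtree u` until none is full. -/
noncomputable def final (T : SandpileTree V) (σ : V → ℕ) (u : V) : V → ℕ :=
  if h : ∃ l : List V, (∀ v ∈ l, v ∈ T.subtree u) ∧ T.ValidSeq σ l ∧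
      T.LocalTerminal (T.fireList σ l) (T.subtree u)
  then T.fireList σ h.choose else σ

/-- Local upward contribution: the number of extra chips received by `parent u`
after adding `x` chips at `u` and firing `subtree u` back to local terminality. -/
noncomputable def delta (T : SandpileTree V) (σ : V → ℕ) (u : V) (x : ℕ) : ℕ :=
  T.final (fun w => σ w + if w = u then x else 0) u (T.parent u) -
    T.final σ u (T.parent u)

/-- `ψ_u(k) = σ(u) − k·deg(u) + Σ_{v ∈ children u} δ(v,k)`. -/
noncomputable def psi (T : SandpileTree V) (σ : V → ℕ) (u : V) (k : ℕ) : ℤ :=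
  (σ u : ℤ) - (k : ℤ) * T.deg u + ∑ v ∈ T.children u, (T.delta σ v k : ℤ)

end SandpileTree

namespace SandpileTree

section Aux
variable {T : SandpileTree V}

lemma iterate_parent_root (T : SandpileTree V) (n : ℕ) : T.parent^[n] T.root = T.root :=
  Function.iterate_fixed T.parent_root n

lemma eq_root_of_cycle {w : V} {m : ℕ} (h : T.parent^[m] w = w) (hm : m ≠ 0) :
    w = T.root := by
  obtain ⟨n, hn⟩ := T.parent_reaches_root w
  have hper : ∀ k, T.parent^[k * m] w = w := by
    intro k
    induction k with
    | zero => simp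
    | succ k ih =>
      have : (k + 1) * m = m + k * m := by ring
      rw [this, Function.iterate_add_apply, ih, h]
  have h1 : T.parent^[n * m] w = w := hper n
  have h2 : n * m = (n * m - n) + n := by
    have : n ≤ n * m := Nat.le_mul_of_pos_right n (Nat.pos_of_ne_zero hm)
    omega
  rw [h2, Function.iterate_add_apply, hn, iterate_parent_root] at h1
  exact h1.symm

lemma parent_ne {u : V} (hu : u ≠ T.root) : T.parent u ≠ u := by
  intro h
  exact hu (eq_root_of_cycle (m := 1) (by simpa using h) one_ne_zero)

lemma self_mem_subtree (T : SandpileTree V) (u : V) : u ∈ T.subtree u := ⟨0, rfl⟩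

lemma parent_not_mem_subtree {u : V} (hu : u ≠ T.root) :
    T.parent u ∉ T.subtree u := by
  rintro ⟨m, hm⟩
  refine hu (eq_root_of_cycle (m := m + 1) ?_ (by omega))
  rw [Function.iterate_succ_apply, hm]

lemma subtree_subset_of_parent {c u : V} (hc : T.parent c = u) :
    T.subtree c ⊆ T.subtree u := by
  rintro w ⟨n, hn⟩
  exact ⟨n + 1, by rw [Function.iterate_succ_apply', hn, hc]⟩

lemma not_mem_subtree_child {c u : V} (hu : u ≠ T.root) (hc : T.parent c = u) :
    u ∉ T.subtree c := by
  rintro ⟨n, hn⟩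
  refine hu (eq_root_of_cycle (m := n + 1) ?_ (by omega))
  rw [Function.iterate_succ_apply', hn, hc]

/-- every edge connects a vertex with its parent -/
lemma adj_parent_or {a b : V} (hab : T.G.Adj a b) :
    T.parent a = b ∨ T.parent b = a := by
  classical
  have hinj : Set.InjOn (fun v => s(v, T.parent v)) ((Finset.univ.erase T.root) : Finset V) := by
    intro x hx y hy hxy
    simp only [Sym2.eq, Sym2.rel_iff', Prod.mk.injEq, Prod.swap_prod_mk] at hxy
    rcases hxy with ⟨h1, h2⟩ | ⟨h1, h2⟩
    · exact h1
    · exfalso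
      have hx' : x ≠ T.root := by simpa using (Finset.mem_erase.mp hx).1
      have hxx : T.parent^[2] x = x := by
        rw [show (2:ℕ) = 1 + 1 from rfl, Function.iterate_add_apply]
        simp [h2, ← h1]
      exact hx' (eq_root_of_cycle hxx (by omega))
  have hmaps : ∀ v ∈ (Finset.univ.erase T.root), s(v, T.parent v) ∈ T.G.edgeFinset := by
    intro v hv
    have hv' : v ≠ T.root := by simpa using (Finset.mem_erase.mp hv).1
    simpa [SimpleGraph.mem_edgeFinset] using T.parent_adj v hv'
  have hcard : T.G.edgeFinset.card ≤ (Finset.univ.erase T.root).card := by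
    have h1 : T.G.edgeFinset.card + 1 = Fintype.card V := T.isTree.card_edgeFinset
    have h2 : (Finset.univ.erase T.root).card = Fintype.card V - 1 := by
      rw [Finset.card_erase_of_mem (Finset.mem_univ _)]
      simp [Finset.card_univ]
    omega
  have hsurj := Finset.surj_on_of_inj_on_of_card_le (s := (Finset.univ.erase T.root))
    (t := T.G.edgeFinset) (fun v _ => s(v, T.parent v)) (fun v hv => hmaps v hv)
    (fun x y hx hy h => hinj hx hy h) hcard
  obtain ⟨v, hv, hveq⟩ := hsurj s(a, b) (by simpa [SimpleGraph.mem_edgeFinset] using hab)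
  rw [Sym2.eq, Sym2.rel_iff'] at hveq
  rcases hveq with h | h
  · rw [Prod.mk.injEq] at h
    left; rw [h.1]; exact h.2.symm
  · rw [Prod.swap_prod_mk, Prod.mk.injEq] at h
    right; rw [h.2, ← h.1]

/-- a neighbor of a vertex in `subtree c` is in `subtree c` or is `parent c`. -/
lemma adj_subtree {c w x : V} (hw : w ∈ T.subtree c) (hadj : T.G.Adj w x) :
    x ∈ T.subtree c ∨ x = T.parent c := by
  obtain ⟨n, hn⟩ := hw
  rcases adj_parent_or hadj with h | h
  · rcases Nat.eq_zero_or_pos n with h0 | h0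
    · right; rw [h0] at hn; simp at hn; rw [← hn, h]
    · left
      refine ⟨n - 1, ?_⟩
      rw [← h]
      have h1 : T.parent^[n-1] (T.parent w) = T.parent^[n-1+1] w :=
        (Function.iterate_succ_apply T.parent (n-1) w).symm
      rw [h1]
      have : n - 1 + 1 = n := by omega
      rw [this, hn]
  · left
    exact ⟨n + 1, by rw [Function.iterate_succ_apply, h, hn]⟩

end Aux

section Aux2
variable {T : SandpileTree V}

lemma fireList_append (σ : V → ℕ) (l l' : List V) :
    T.fireList σ (l ++ l') = T.fireList (T.fireList σ l) l' := by
  induction l generalizing σ with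
  | nil => rfl
  | cons v t ih => simp [fireList, ih]

lemma validSeq_append {σ : V → ℕ} {l l' : List V} (h : T.ValidSeq σ l)
    (h' : T.ValidSeq (T.fireList σ l) l') : T.ValidSeq σ (l ++ l') := by
  induction l generalizing σ with
  | nil => exact h'
  | cons v t ih =>
    exact ⟨h.1, ih h.2 h'⟩

lemma le_fire_of_ne {σ : V → ℕ} {v w : V} (h : w ≠ v) : σ w ≤ T.fire σ v w := by
  unfold fire
  rw [if_neg h]
  split <;> omega

lemma le_fireList_of_not_mem {σ : V → ℕ} {l : List V} {w : V} (h : w ∉ l) :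
    σ w ≤ T.fireList σ l w := by
  induction l generalizing σ with
  | nil => exact le_rfl
  | cons v t ih =>
    have h1 : w ≠ v := fun hh => h (by simp [hh])
    calc σ w ≤ T.fire σ v w := le_fire_of_ne h1
    _ ≤ T.fireList (T.fire σ v) t w := ih (fun hh => h (by simp [hh]))

lemma fireList_untouched {σ : V → ℕ} {l : List V} {w : V}
    (h : ∀ v ∈ l, w ≠ v ∧ ¬ T.G.Adj v w) : T.fireList σ l w = σ w := by
  induction l generalizing σ with
  | nil => rfl
  | cons v t ih =>
    have h1 := h v (by simp)
    have : T.fire σ v w = σ w := by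
      unfold fire
      rw [if_neg h1.1, if_neg h1.2]
    rw [fireList, ih (fun x hx => h x (by simp [hx])), this]

lemma fireList_countP {σ : V → ℕ} {l : List V} {w : V} (h : w ∉ l) :
    T.fireList σ l w = σ w + l.countP (fun v => decide (T.G.Adj v w)) := by
  induction l generalizing σ with
  | nil => simp [fireList]
  | cons v t ih =>
    have h1 : w ≠ v := fun hh => h (by simp [hh])
    rw [fireList, ih (fun hh => h (by simp [hh])), List.countP_cons]
    unfold fire
    rw [if_neg h1]
    by_cases hadj : T.G.Adj v w
    · simp [hadj]; omega
    · simp [hadj]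

lemma fire_mono {σ τ : V → ℕ} {v : V} (hst : ∀ w, σ w ≤ τ w) (hv : T.deg v ≤ σ v) :
    ∀ w, T.fire σ v w ≤ T.fire τ v w := by
  intro w
  unfold fire
  by_cases h : w = v
  · rw [if_pos h, if_pos h]
    have := hst v; omega
  · rw [if_neg h, if_neg h]
    have := hst w
    split <;> omega

lemma validSeq_mono {σ τ : V → ℕ} {l : List V} (hv : T.ValidSeq σ l)
    (hst : ∀ w, σ w ≤ τ w) :
    T.ValidSeq τ l ∧ ∀ w, T.fireList σ l w ≤ T.fireList τ l w := by
  induction l generalizing σ τ with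
  | nil => exact ⟨trivial, hst⟩
  | cons v t ih =>
    have hd : T.deg v ≤ τ v := le_trans hv.1 (hst v)
    have hm := fire_mono hst hv.1 (v := v)
    have := ih hv.2 hm
    exact ⟨⟨hd, this.1⟩, this.2⟩

lemma fire_add {σ e : V → ℕ} {v : V} (hv : T.deg v ≤ σ v) :
    T.fire (fun w => σ w + e w) v = fun w => T.fire σ v w + e w := by
  funext w
  simp only [fire]
  by_cases h : w = v
  · subst h; rw [if_pos rfl, if_pos rfl]; omega
  · simp only [if_neg h]
    by_cases h2 : T.G.Adj v w <;> simp [h2] <;> omega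

lemma validSeq_add {σ : V → ℕ} {l : List V} (hv : T.ValidSeq σ l) (e : V → ℕ) :
    T.ValidSeq (fun w => σ w + e w) l ∧
      T.fireList (fun w => σ w + e w) l = fun w => T.fireList σ l w + e w := by
  induction l generalizing σ with
  | nil => exact ⟨trivial, rfl⟩
  | cons v t ih =>
    have h1 : T.deg v ≤ σ v + e v := le_trans hv.1 (by omega)
    have h2 := fire_add (e := e) hv.1 (v := v)
    have h3 := ih hv.2
    constructor
    · refine ⟨h1, ?_⟩
      rw [h2]; exact h3.1
    · rw [fireList, h2, h3.2]; rfl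

lemma fire_comm {σ : V → ℕ} {v w : V} (hvw : v ≠ w) (hv : T.deg v ≤ σ v)
    (hw : T.deg w ≤ σ w) : T.fire (T.fire σ v) w = T.fire (T.fire σ w) v := by
  have hwv : ¬ w = v := fun h => hvw h.symm
  funext x
  simp only [fire]
  by_cases hxv : x = v <;> by_cases hxw : x = w
  · exact absurd (hxv.symm.trans hxw) hvw
  · by_cases hadj : T.G.Adj w v <;> simp [hxv, hvw, hadj] <;> omega
  · by_cases hadj : T.G.Adj v w <;> simp [hxw, hwv, hadj] <;> omega
  · simp only [if_neg hxv, if_neg hxw]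
    by_cases h1 : T.G.Adj v x <;> by_cases h2 : T.G.Adj w x <;> simp [h1, h2]

end Aux2

section Aux3
variable {T : SandpileTree V}

lemma exists_split_first {v : V} {l : List V} (h : v ∈ l) :
    ∃ a b, l = a ++ v :: b ∧ v ∉ a := by
  induction l with
  | nil => simp at h
  | cons w t ih =>
    by_cases hwv : w = v
    · exact ⟨[], t, by rw [hwv]; rfl, by simp⟩
    · have hv : v ∈ t := by
        rcases List.mem_cons.mp h with h1 | h1
        · exact absurd h1.symm hwv
        · exact h1
      obtain ⟨a, b, hab, hna⟩ := ih hv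
      exact ⟨w :: a, b, by rw [hab]; rfl, by
        simp [hna]
        exact fun hh => hwv hh.symm⟩

lemma move_to_front {σ : V → ℕ} {v : V} {a b : List V}
    (hval : T.ValidSeq σ (a ++ v :: b)) (hna : v ∉ a) (hv : T.deg v ≤ σ v) :
    T.ValidSeq σ (v :: (a ++ b)) ∧
      T.fireList σ (v :: (a ++ b)) = T.fireList σ (a ++ v :: b) := by
  induction a generalizing σ with
  | nil => exact ⟨hval, rfl⟩
  | cons w t ih =>
    have hvw : v ≠ w := fun h => hna (by simp [h])
    obtain ⟨hw, hval2⟩ := hval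
    have hv2 : T.deg v ≤ T.fire σ w v := le_trans hv (le_fire_of_ne hvw)
    obtain ⟨ih1, ih2⟩ := ih hval2 (fun h => hna (by simp [h])) hv2
    have hcomm : T.fire (T.fire σ w) v = T.fire (T.fire σ v) w :=
      fire_comm (fun h => hvw h.symm) hw hv
    constructor
    · refine ⟨hv, ?_⟩
      show T.ValidSeq (T.fire σ v) (w :: (t ++ b))
      refine ⟨le_trans hw (le_fire_of_ne (fun h => hvw h.symm)), ?_⟩
      show T.ValidSeq (T.fire (T.fire σ v) w) (t ++ b)
      rw [← hcomm]
      exact ih1.2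
    · show T.fireList (T.fire (T.fire σ v) w) (t ++ b) =
        T.fireList (T.fire σ w) (t ++ v :: b)
      rw [← hcomm]
      exact ih2

/-- Least action principle. -/
lemma lap {u : V} : ∀ (l : List V) (σ : V → ℕ) (l' : List V),
    T.ValidSeq σ l → (∀ v ∈ l, v ∈ T.subtree u) →
    T.ValidSeq σ l' → (∀ v ∈ l', v ∈ T.subtree u) →
    T.LocalTerminal (T.fireList σ l') (T.subtree u) →
    (l : Multiset V) ≤ (l' : Multiset V) := by
  intro l
  induction l with
  | nil => intro σ l' _ _ _ _ _; simp
  | cons v t ih =>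
    intro σ l' hval hsub hval' hsub' hterm
    have hv : T.deg v ≤ σ v := hval.1
    have hvmem : v ∈ l' := by
      by_contra hvn
      have h1 : σ v ≤ T.fireList σ l' v := le_fireList_of_not_mem hvn
      have h2 := hterm v (hsub v (by simp))
      omega
    obtain ⟨a, b, hab, hna⟩ := exists_split_first hvmem
    subst hab
    obtain ⟨hval2, heq⟩ := move_to_front hval' hna hv
    have ht := ih (T.fire σ v) (a ++ b) hval.2
      (fun x hx => hsub x (by simp [hx]))
      hval2.2
      (fun x hx => hsub' x (by
        rcases List.mem_append.mp hx with h | h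
        · simp [h]
        · simp [h]))
      (by
        have : T.fireList (T.fire σ v) (a ++ b) = T.fireList σ (a ++ v :: b) := by
          rw [← heq]; rfl
        rw [this]; exact hterm)
    have hperm : ((a ++ v :: b : List V) : Multiset V) = ((v :: (a ++ b) : List V) : Multiset V) :=
      Quot.sound List.perm_middle
    rw [hperm]
    show (v ::ₘ (t : Multiset V)) ≤ (v ::ₘ ((a ++ b : List V) : Multiset V))
    exact Multiset.cons_le_cons v ht

lemma validSeq_nil_of_terminal {σ : V → ℕ} {u : V} {l : List V}
    (hterm : T.LocalTerminal σ (T.subtree u)) (hval : T.ValidSeq σ l)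
    (hsub : ∀ v ∈ l, v ∈ T.subtree u) : l = [] := by
  cases l with
  | nil => rfl
  | cons v t =>
    have h1 := hval.1
    have h2 := hterm v (hsub v (by simp))
    omega

lemma adj_subtree_parent {u w : V} (hu : u ≠ T.root) (hw : w ∈ T.subtree u)
    (hadj : T.G.Adj w (T.parent u)) : w = u := by
  rcases adj_parent_or hadj with h | h
  · obtain ⟨n, hn⟩ := hw
    rcases Nat.eq_zero_or_pos n with h0 | h0
    · rw [h0] at hn; simpa using hn
    · exfalso
      apply parent_not_mem_subtree hu
      refine ⟨n - 1, ?_⟩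
      rw [← h]
      have h1 : T.parent^[n-1] (T.parent w) = T.parent^[n-1+1] w :=
        (Function.iterate_succ_apply T.parent (n-1) w).symm
      rw [h1]
      have : n - 1 + 1 = n := by omega
      rw [this, hn]
  · exfalso
    apply parent_not_mem_subtree hu
    obtain ⟨n, hn⟩ := hw
    exact ⟨n + 1, by rw [Function.iterate_succ_apply, h, hn]⟩

lemma fireList_at_parent {σ : V → ℕ} {u : V} {l : List V} (hu : u ≠ T.root)
    (hsub : ∀ v ∈ l, v ∈ T.subtree u) :
    T.fireList σ l (T.parent u) = σ (T.parent u) + l.count u := by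
  induction l generalizing σ with
  | nil => simp [fireList]
  | cons w t ih =>
    have hwmem := hsub w (by simp)
    have hpw : T.parent u ≠ w := by
      intro h
      exact parent_not_mem_subtree hu (h ▸ hwmem)
    have step : T.fire σ w (T.parent u) = σ (T.parent u) + (if w = u then 1 else 0) := by
      unfold fire
      rw [if_neg hpw]
      by_cases hwu : w = u
      · rw [if_pos (hwu ▸ T.parent_adj u hu), if_pos hwu]
      · rw [if_neg hwu, if_neg (fun hadj => hwu (adj_subtree_parent hu hwmem hadj))]
        simp
    rw [fireList, ih (fun x hx => hsub x (by simp [hx])), step, List.count_cons]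
    by_cases hwu : w = u <;> simp [hwu] <;> omega

end Aux3

section Aux4
variable {T : SandpileTree V}

lemma child_ne_root {c u : V} (hc : c ∈ T.children u) : c ≠ T.root := by
  rw [children, Finset.mem_filter] at hc
  intro h
  exact hc.2.2 (by rw [h, ← hc.2.1, h, T.parent_root])

lemma child_parent {c u : V} (hc : c ∈ T.children u) : T.parent c = u := by
  rw [children, Finset.mem_filter] at hc
  exact hc.2.1

lemma child_adj {c u : V} (hc : c ∈ T.children u) : T.G.Adj c u := by
  have := T.parent_adj c (child_ne_root hc)
  rwa [child_parent hc] at this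

lemma parent_not_child {u : V} (hu : u ≠ T.root) : T.parent u ∉ T.children u := by
  intro h
  have h1 := child_parent h
  exact hu (eq_root_of_cycle (m := 2) (by
    rw [show (2:ℕ) = 1 + 1 from rfl, Function.iterate_add_apply]
    simpa using h1) (by omega))

lemma children_card_lt_deg {u : V} (hu : u ≠ T.root) :
    (T.children u).card + 1 ≤ T.deg u := by
  have hsub : insert (T.parent u) (T.children u) ⊆ T.G.neighborFinset u := by
    intro x hx
    rw [Finset.mem_insert] at hx
    rw [SimpleGraph.mem_neighborFinset]
    rcases hx with h | h
    · exact h ▸ T.parent_adj u hu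
    · exact (child_adj h).symm
  have hcard := Finset.card_le_card hsub
  rw [Finset.card_insert_of_notMem (parent_not_child hu)] at hcard
  have : (T.G.neighborFinset u).card = T.deg u := rfl
  omega

lemma subtree_disjoint {c c' u : V} (hu : u ≠ T.root) (hc : c ∈ T.children u)
    (hc' : c' ∈ T.children u) (hne : c ≠ c') {w : V} (hw : w ∈ T.subtree c)
    (hw' : w ∈ T.subtree c') : False := by
  have key : ∀ c c' : V, c ∈ T.children u → c' ∈ T.children u → c ≠ c' →
      ∀ n m : ℕ, n ≤ m → T.parent^[n] w = c → T.parent^[m] w = c' → False := by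
    intro c c' hc hc' hne n m hnm hn hm
    have h1 : T.parent^[m - n] c = c' := by
      rw [← hn, ← Function.iterate_add_apply]
      have : m - n + n = m := by omega
      rw [this, hm]
    rcases Nat.eq_zero_or_pos (m - n) with h0 | h0
    · rw [h0] at h1; simp at h1; exact hne h1
    · apply not_mem_subtree_child hu (child_parent hc')
      refine ⟨m - n - 1, ?_⟩
      rw [← child_parent hc]
      have h2 : T.parent^[m-n-1] (T.parent c) = T.parent^[m-n-1+1] c :=
        (Function.iterate_succ_apply T.parent (m-n-1) c).symm
      rw [h2]
      have : m - n - 1 + 1 = m - n := by omega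
      rw [this, h1]
  obtain ⟨n, hn⟩ := hw
  obtain ⟨m, hm⟩ := hw'
  rcases le_total n m with h | h
  · exact key c c' hc hc' hne n m h hn hm
  · exact key c' c hc' hc hne.symm m n h hm hn

lemma subtree_decomp {u : V} : ∀ (n : ℕ) (v : V), T.parent^[n] v = u → v ≠ u →
    ∃ c ∈ T.children u, v ∈ T.subtree c := by
  intro n
  induction n with
  | zero => intro v hv hne; exact absurd hv hne
  | succ n ih =>
    intro v hv hne
    set c := T.parent^[n] v with hcdef
    have hpc : T.parent c = u := by
      rw [hcdef, ← Function.iterate_succ_apply' T.parent n v]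
      exact hv
    by_cases hcu : c = u
    · exact ih v (hcu ▸ hcdef.symm) hne
    · refine ⟨c, ?_, ⟨n, hcdef.symm⟩⟩
      rw [children, Finset.mem_filter]
      exact ⟨Finset.mem_univ c, hpc, hcu⟩

lemma adj_child_subtree_eq {u c v : V} (hu : u ≠ T.root) (hc : c ∈ T.children u)
    (hv : v ∈ T.subtree c) (hadj : T.G.Adj v u) : v = c := by
  rcases adj_parent_or hadj with h | h
  · obtain ⟨n, hn⟩ := hv
    rcases Nat.eq_zero_or_pos n with h0 | h0
    · rw [h0] at hn; simpa using hn
    · exfalso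
      apply not_mem_subtree_child hu (child_parent hc)
      refine ⟨n - 1, ?_⟩
      rw [← h]
      have h1 : T.parent^[n-1] (T.parent v) = T.parent^[n-1+1] v :=
        (Function.iterate_succ_apply T.parent (n-1) v).symm
      rw [h1]
      have : n - 1 + 1 = n := by omega
      rw [this, hn]
  · exfalso
    apply parent_not_mem_subtree hu
    rw [h]
    exact (subtree_subset_of_parent (child_parent hc)) hv

lemma countP_cons_mem_le (c : V) (t : List V) (l : List V) :
    l.countP (fun v => decide (v ∈ c :: t)) ≤
      l.count c + l.countP (fun v => decide (v ∈ t)) := by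
  have hfun : (fun v : V => decide (v ∈ c :: t)) =
      (fun v => decide (v = c) || decide (v ∈ t)) := by
    funext v
    by_cases h1 : v = c <;> by_cases h2 : v ∈ t <;> simp [List.mem_cons, h1, h2]
  rw [hfun]
  induction l with
  | nil => simp
  | cons w s ih =>
    rw [List.countP_cons, List.countP_cons, List.count_cons]
    by_cases h1 : w = c <;> by_cases h2 : w ∈ t <;>
      simp [h1, h2] <;> omega

lemma countP_mono_pred {p q : V → Prop} [DecidablePred p] [DecidablePred q] {l : List V}
    (h : ∀ v ∈ l, p v → q v) :
    l.countP (fun v => decide (p v)) ≤ l.countP (fun v => decide (q v)) := by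
  induction l with
  | nil => simp
  | cons w t ih =>
    rw [List.countP_cons, List.countP_cons]
    have ht := ih (fun v hv => h v (by simp [hv]))
    by_cases hp : p w
    · have := h w (by simp) hp
      simp [hp, this]; omega
    · simp [hp]; omega

lemma countP_mem_le_sum (l : List V) : ∀ cs : List V,
    l.countP (fun v => decide (v ∈ cs)) ≤ (cs.map (fun c => l.count c)).sum := by
  intro cs
  induction cs with
  | nil => simp
  | cons c t ih =>
    rw [List.map_cons, List.sum_cons]
    have h1 := countP_cons_mem_le c t l
    omega

end Aux4

section Aux5
variable {T : SandpileTree V}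

/-- Stabilize each child subtree after each child got one extra chip. -/
lemma innerLoop {u : V} (hu : u ≠ T.root)
    (IH : ∀ c ∈ T.children u, ∀ ρ : V → ℕ, T.LocalTerminal ρ (T.subtree c) →
      ∃ l : List V, (∀ v ∈ l, v ∈ T.subtree c) ∧
        T.ValidSeq (fun w => ρ w + if w = c then 1 else 0) l ∧
        T.LocalTerminal (T.fireList (fun w => ρ w + if w = c then 1 else 0) l)
          (T.subtree c) ∧ l.count c ≤ 1) :
    ∀ cs : List V, cs.Nodup → (∀ c ∈ cs, c ∈ T.children u) →
    ∀ ρ : V → ℕ, (∀ c ∈ cs, T.LocalTerminal ρ (T.subtree c)) →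
    ∃ L : List V, (∀ w ∈ L, ∃ c ∈ cs, w ∈ T.subtree c) ∧
      T.ValidSeq (fun w => ρ w + cs.count w) L ∧
      (∀ c ∈ cs, T.LocalTerminal (T.fireList (fun w => ρ w + cs.count w) L)
        (T.subtree c)) ∧
      (∀ c ∈ cs, L.count c ≤ 1) := by
  intro cs
  induction cs with
  | nil =>
    intro _ _ ρ _
    exact ⟨[], by simp, trivial,
      by simp, by simp⟩
  | cons c cs' ih =>
    intro hnd hch ρ hterm
    have hcc' : c ∉ cs' := (List.nodup_cons.mp hnd).1
    have hnd' : cs'.Nodup := (List.nodup_cons.mp hnd).2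
    have hcchild : c ∈ T.children u := hch c (by simp)
    -- stabilize subtree c first
    obtain ⟨lc, hlc_sub, hlc_val, hlc_term, hlc_cnt⟩ :=
      IH c hcchild ρ (hterm c (by simp))
    set τ : V → ℕ := T.fireList (fun w => ρ w + if w = c then 1 else 0) lc with hτ
    have hA : (fun w => ρ w + (c :: cs').count w) =
        (fun w => (fun x => ρ x + if x = c then 1 else 0) w + cs'.count w) := by
      funext w
      by_cases h : w = c
      · simp [List.count_cons, h]; omega
      · simp [List.count_cons, h]; exact fun e => h e.symm
    obtain ⟨hval2, heq2⟩ := validSeq_add hlc_val (fun w => cs'.count w)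
    -- τ is terminal on each other child subtree
    have hτother : ∀ c' ∈ cs', T.LocalTerminal τ (T.subtree c') := by
      intro c' hc' w hw
      have hne : c ≠ c' := fun h => hcc' (h ▸ hc')
      have huntouched : τ w = ρ w + (if w = c then 1 else 0) := by
        apply fireList_untouched
        intro v hv
        have hvsub := hlc_sub v hv
        constructor
        · intro h
          exact subtree_disjoint hu hcchild (hch c' (by simp [hc'])) hne
            (h ▸ hvsub) hw
        · intro hadj
          rcases adj_subtree hvsub hadj with h | h
          · exact subtree_disjoint hu hcchild (hch c' (by simp [hc'])) hne h hw
          · rw [child_parent hcchild] at h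
            exact not_mem_subtree_child hu (child_parent (hch c' (by simp [hc'])))
              (h ▸ hw)
      have hwc : w ≠ c := by
        intro h
        exact subtree_disjoint hu hcchild (hch c' (by simp [hc'])) hne
          (h ▸ self_mem_subtree T c) hw
      rw [huntouched, if_neg hwc]
      simpa using hterm c' (by simp [hc']) w hw
    obtain ⟨L', hL'_sub, hL'_val, hL'_term, hL'_cnt⟩ :=
      ih hnd' (fun x hx => hch x (by simp [hx])) τ hτother
    refine ⟨lc ++ L', ?_, ?_, ?_, ?_⟩
    · intro w hw
      rcases List.mem_append.mp hw with h | h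
      · exact ⟨c, by simp, hlc_sub w h⟩
      · obtain ⟨c', hc', hwc'⟩ := hL'_sub w h
        exact ⟨c', by simp [hc'], hwc'⟩
    · rw [hA]
      apply validSeq_append hval2
      rw [heq2]
      exact hL'_val
    · intro c'' hc''
      have hfinal : T.fireList (fun w => ρ w + (c :: cs').count w) (lc ++ L') =
          T.fireList (fun w => τ w + cs'.count w) L' := by
        rw [hA, fireList_append, heq2]
      rw [hfinal]
      rcases List.mem_cons.mp hc'' with h | h
      · -- c'' = c
        subst h
        intro w hw
        have huntouched : T.fireList (fun w => τ w + cs'.count w) L' w =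
            τ w + cs'.count w := by
          apply fireList_untouched
          intro v hv
          obtain ⟨c', hc', hvc'⟩ := hL'_sub v hv
          have hne : c'' ≠ c' := fun h => hcc' (h ▸ hc')
          constructor
          · intro h
            exact subtree_disjoint hu hcchild (hch c' (by simp [hc'])) hne
              hw (h ▸ hvc')
          · intro hadj
            rcases adj_subtree hvc' hadj with h | h
            · exact subtree_disjoint hu hcchild (hch c' (by simp [hc'])) hne hw h
            · rw [child_parent (hch c' (by simp [hc']))] at h
              exact not_mem_subtree_child hu (child_parent hcchild) (h ▸ hw)
        have hcnt0 : cs'.count w = 0 := by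
          rw [List.count_eq_zero]
          intro hwmem
          exact subtree_disjoint hu hcchild (hch w (by simp [hwmem]))
            (fun h => hcc' (h ▸ hwmem)) hw (self_mem_subtree T w)
        rw [huntouched, hcnt0]
        simpa using hlc_term w hw
      · exact hL'_term c'' h
    · intro c'' hc''
      rw [List.count_append]
      rcases List.mem_cons.mp hc'' with h | h
      · subst h
        have : L'.count c'' = 0 := by
          rw [List.count_eq_zero]
          intro hmem
          obtain ⟨c', hc', hcc''⟩ := hL'_sub c'' hmem
          exact subtree_disjoint hu hcchild (hch c' (by simp [hc']))
            (fun h => hcc' (h ▸ hc')) (self_mem_subtree T c'') hcc''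
        omega
      · have : lc.count c'' = 0 := by
          rw [List.count_eq_zero]
          intro hmem
          exact subtree_disjoint hu hcchild (hch c'' (by simp [h]))
            (fun hh => hcc' (hh ▸ h)) (hlc_sub c'' hmem) (self_mem_subtree T c'')
        have := hL'_cnt c'' h
        omega

lemma sum_map_le_length (L : List V) : ∀ cs : List V, (∀ c ∈ cs, L.count c ≤ 1) →
    (cs.map (fun c => L.count c)).sum ≤ cs.length := by
  intro cs
  induction cs with
  | nil => simp
  | cons c t ih =>
    intro h
    have h1 := h c (by simp)
    have h2 := ih (fun x hx => h x (by simp [hx]))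
    simp only [List.map_cons, List.sum_cons, List.length_cons]
    omega

/-- Adding one chip at `u` to a locally terminal configuration can be stabilized
firing `u` at most once. -/
lemma oneChip : ∀ (N : ℕ) (u : V), u ≠ T.root →
    (T.subtree u).toFinset.card ≤ N → ∀ σ : V → ℕ,
    T.LocalTerminal σ (T.subtree u) →
    ∃ l : List V, (∀ v ∈ l, v ∈ T.subtree u) ∧
      T.ValidSeq (fun w => σ w + if w = u then 1 else 0) l ∧
      T.LocalTerminal (T.fireList (fun w => σ w + if w = u then 1 else 0) l)
        (T.subtree u) ∧ l.count u ≤ 1 := by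
  intro N
  induction N with
  | zero =>
    intro u hu hcard
    exfalso
    have : u ∈ (T.subtree u).toFinset := Set.mem_toFinset.mpr (self_mem_subtree T u)
    have := Finset.card_pos.mpr ⟨u, this⟩
    omega
  | succ N ihN =>
    intro u hu hcard σ hσ
    by_cases hfull : σ u + 1 < T.deg u
    · refine ⟨[], by simp, trivial, ?_, by simp⟩
      intro v hv
      show σ v + (if v = u then 1 else 0) < T.deg v
      by_cases h : v = u
      · subst h
        have he : (if v = v then 1 else 0) = 1 := if_pos rfl
        omega
      · have he : (if v = u then 1 else 0) = 0 := if_neg h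
        have h2 := hσ v hv
        omega
    · have hσu : σ u < T.deg u := hσ u (self_mem_subtree T u)
      have hdeq : σ u + 1 = T.deg u := by omega
      set cs := (T.children u).toList with hcs
      have hIH : ∀ c ∈ T.children u, ∀ ρ : V → ℕ, T.LocalTerminal ρ (T.subtree c) →
          ∃ l : List V, (∀ v ∈ l, v ∈ T.subtree c) ∧
            T.ValidSeq (fun w => ρ w + if w = c then 1 else 0) l ∧
            T.LocalTerminal (T.fireList (fun w => ρ w + if w = c then 1 else 0) l)
              (T.subtree c) ∧ l.count c ≤ 1 := by
        intro c hc
        apply ihN c (child_ne_root hc)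
        have h1 : T.subtree c ⊆ T.subtree u := subtree_subset_of_parent (child_parent hc)
        have h2 : ¬ T.subtree u ⊆ T.subtree c := fun habs =>
          not_mem_subtree_child hu (child_parent hc) (habs (self_mem_subtree T u))
        have hss : (T.subtree c).toFinset ⊂ (T.subtree u).toFinset := by
          rw [Set.toFinset_ssubset_toFinset]
          exact ssubset_iff_subset_not_subset.mpr ⟨h1, h2⟩
        have := Finset.card_lt_card hss
        omega
      set ρ₀ : V → ℕ := fun w =>
        if w = T.parent u then σ w + 1 else if w = u then 0 else σ w with hρ₀
      have hpu : T.parent u ≠ u := parent_ne hu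
      have hupu : u ≠ T.parent u := fun h => hpu h.symm
      have hcs_mem : ∀ x : V, x ∈ cs ↔ x ∈ T.children u := by
        intro x; rw [hcs, Finset.mem_toList]
      have hcs_nd : cs.Nodup := by rw [hcs]; exact Finset.nodup_toList _
      have hu_cs : u ∉ cs := by
        rw [hcs_mem, children, Finset.mem_filter]; simp
      have hp_cs : T.parent u ∉ cs := by
        rw [hcs_mem]; exact parent_not_child hu
      have hfire : T.fire (fun w => σ w + if w = u then 1 else 0) u =
          fun w => ρ₀ w + cs.count w := by
        funext w
        simp only [fire, hρ₀]
        by_cases hw : w = u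
        · subst hw
          rw [if_pos rfl, List.count_eq_zero.mpr hu_cs, if_neg hupu, if_pos rfl]
          simp only [if_true, eq_self_iff_true]
          omega
        · rw [if_neg hw]
          by_cases hwp : w = T.parent u
          · have hadj : T.G.Adj u w := hwp ▸ T.parent_adj u hu
            rw [if_pos hadj, if_pos hwp,
              List.count_eq_zero.mpr (fun h => hp_cs (hwp ▸ h))]
            simp [hw]
          · by_cases hadj : T.G.Adj u w
            · have hpw : T.parent w = u := by
                rcases adj_parent_or hadj with h | h
                · exact absurd h.symm hwp
                · exact h
              have hwch : w ∈ T.children u := by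
                rw [children, Finset.mem_filter]
                exact ⟨Finset.mem_univ w, hpw, hw⟩
              have hcnt1 : cs.count w = 1 :=
                List.nodup_iff_count_eq_one.mp hcs_nd w ((hcs_mem w).mpr hwch)
              rw [if_pos hadj, if_neg hwp, if_neg hw, hcnt1]
              simp [hw]
            · have hwnch : w ∉ cs := by
                rw [hcs_mem]
                intro h
                exact hadj (child_adj h).symm
              rw [if_neg hadj, if_neg hwp, if_neg hw,
                List.count_eq_zero.mpr hwnch]
              simp [hw]
      have hρterm : ∀ c ∈ cs, T.LocalTerminal ρ₀ (T.subtree c) := by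
        intro c hc w hw
        have hc' : c ∈ T.children u := (hcs_mem c).mp hc
        have hwu : w ≠ u := fun h =>
          not_mem_subtree_child hu (child_parent hc') (h ▸ hw)
        have hwsub : w ∈ T.subtree u := subtree_subset_of_parent (child_parent hc') hw
        have hwp : w ≠ T.parent u := fun h =>
          parent_not_mem_subtree hu (h ▸ hwsub)
        simp only [hρ₀]
        rw [if_neg hwp, if_neg hwu]
        exact hσ w hwsub
      obtain ⟨L, hL_sub, hL_val, hL_term, hL_cnt⟩ :=
        innerLoop hu hIH cs hcs_nd (fun c hc => (hcs_mem c).mp hc) ρ₀ hρterm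
      have huL : u ∉ L := by
        intro h
        obtain ⟨c, hc, husub⟩ := hL_sub u h
        exact not_mem_subtree_child hu (child_parent ((hcs_mem c).mp hc)) husub
      have hflist : T.fireList (fun w => σ w + if w = u then 1 else 0) (u :: L) =
          T.fireList (fun w => ρ₀ w + cs.count w) L := by
        show T.fireList (T.fire (fun w => σ w + if w = u then 1 else 0) u) L = _
        rw [hfire]
      refine ⟨u :: L, ?_, ?_, ?_, ?_⟩
      · intro v hv
        rcases List.mem_cons.mp hv with h | h
        · exact h ▸ self_mem_subtree T u
        · obtain ⟨c, hc, hvsub⟩ := hL_sub v h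
          exact subtree_subset_of_parent (child_parent ((hcs_mem c).mp hc)) hvsub
      · refine ⟨?_, ?_⟩
        · simp; omega
        · show T.ValidSeq (T.fire (fun w => σ w + if w = u then 1 else 0) u) L
          rw [hfire]
          exact hL_val
      · rw [hflist]
        intro v hv
        by_cases hvu : v = u
        · subst hvu
          rw [fireList_countP huL]
          have hρu : ρ₀ v = 0 := by
            simp only [hρ₀]
            rw [if_neg hupu]
            simp
          have hcnt0 : cs.count v = 0 := List.count_eq_zero.mpr hu_cs
          have hstep1 : L.countP (fun x => decide (T.G.Adj x v)) ≤
              L.countP (fun x => decide (x ∈ cs)) := by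
            apply countP_mono_pred
            intro x hx hadj
            obtain ⟨c, hc, hxsub⟩ := hL_sub x hx
            have := adj_child_subtree_eq hu ((hcs_mem c).mp hc) hxsub hadj
            exact this ▸ hc
          have hstep2 := countP_mem_le_sum L cs
          have hstep3 := sum_map_le_length L cs hL_cnt
          have hstep4 : cs.length = (T.children v).card := by
            rw [hcs]; exact Finset.length_toList _
          have hstep5 := children_card_lt_deg hu
          simp only [hρu, hcnt0]
          omega
        · obtain ⟨n, hn⟩ := hv
          obtain ⟨c, hc, hvc⟩ := subtree_decomp n v hn hvu
          exact hL_term c ((hcs_mem c).mpr hc) v hvc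
      · have h0 : L.count u = 0 := List.count_eq_zero.mpr huL
        rw [List.count_cons]
        simp [h0]

end Aux5

section Aux6
variable {T : SandpileTree V}

lemma config_succ (σ : V → ℕ) (u : V) (k : ℕ) :
    (fun w => σ w + if w = u then k + 1 else 0) =
      (fun w => (σ w + if w = u then k else 0) + if w = u then 1 else 0) := by
  funext w
  by_cases h : w = u <;> simp [h] <;> omega

lemma exists_stab {u : V} (hu : u ≠ T.root) {σ : V → ℕ}
    (hσ : T.LocalTerminal σ (T.subtree u)) :
    ∀ k : ℕ, ∃ l : List V, (∀ v ∈ l, v ∈ T.subtree u) ∧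
      T.ValidSeq (fun w => σ w + if w = u then k else 0) l ∧
      T.LocalTerminal (T.fireList (fun w => σ w + if w = u then k else 0) l)
        (T.subtree u) := by
  intro k
  induction k with
  | zero =>
    refine ⟨[], by simp, trivial, ?_⟩
    intro v hv
    have he : (if v = u then (0:ℕ) else 0) = 0 := by simp
    have := hσ v hv
    show (σ v + if v = u then 0 else 0) < T.deg v
    omega
  | succ k ih =>
    obtain ⟨l, hsub, hval, hterm⟩ := ih
    obtain ⟨hval2, heq2⟩ := validSeq_add hval (fun w => if w = u then 1 else 0)
    obtain ⟨l', hsub', hval', hterm', _⟩ :=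
      oneChip (T := T) ((T.subtree u).toFinset.card) u hu le_rfl
        (T.fireList (fun w => σ w + if w = u then k else 0) l) hterm
    refine ⟨l ++ l', ?_, ?_, ?_⟩
    · intro v hv
      rcases List.mem_append.mp hv with h | h
      · exact hsub v h
      · exact hsub' v h
    · rw [config_succ]
      apply validSeq_append hval2
      rw [heq2]
      exact hval'
    · rw [config_succ, fireList_append, heq2]
      exact hterm'

/-- existence together with the +1 count bound -/
lemma exists_stab_succ {u : V} (hu : u ≠ T.root) {σ : V → ℕ} {k : ℕ} {l : List V}
    (hsub : ∀ v ∈ l, v ∈ T.subtree u)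
    (hval : T.ValidSeq (fun w => σ w + if w = u then k else 0) l)
    (hterm : T.LocalTerminal
      (T.fireList (fun w => σ w + if w = u then k else 0) l) (T.subtree u)) :
    ∃ m : List V, (∀ v ∈ m, v ∈ T.subtree u) ∧
      T.ValidSeq (fun w => σ w + if w = u then k + 1 else 0) m ∧
      T.LocalTerminal (T.fireList (fun w => σ w + if w = u then k + 1 else 0) m)
        (T.subtree u) ∧ m.count u ≤ l.count u + 1 := by
  obtain ⟨hval2, heq2⟩ := validSeq_add hval (fun w => if w = u then 1 else 0)
  obtain ⟨l', hsub', hval', hterm', hcnt'⟩ :=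
    oneChip (T := T) ((T.subtree u).toFinset.card) u hu le_rfl
      (T.fireList (fun w => σ w + if w = u then k else 0) l) hterm
  refine ⟨l ++ l', ?_, ?_, ?_, ?_⟩
  · intro v hv
    rcases List.mem_append.mp hv with h | h
    · exact hsub v h
    · exact hsub' v h
  · rw [config_succ]
    apply validSeq_append hval2
    rw [heq2]
    exact hval'
  · rw [config_succ, fireList_append, heq2]
    exact hterm'
  · rw [List.count_append]
    omega

end Aux6


end SandpileTree

/-- Monotonicity with unit increments of the local upward contribution:
`δ(u,k) ≤ δ(u,k+1) ≤ δ(u,k) + 1` for every non-root vertex `u`. -/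
theorem SandpileTree.delta_mono_step (T : SandpileTree V) (σ : V → ℕ) (u : V)
    (hu : u ≠ T.root) (hσ : T.LocalTerminal σ (T.subtree u)) :
    ∀ k : ℕ, T.delta σ u k ≤ T.delta σ u (k + 1) ∧
      T.delta σ u (k + 1) ≤ T.delta σ u k + 1 := by
  intro k
  have hpne : T.parent u ≠ u := parent_ne hu
  have cond : ∀ j : ℕ, ∃ l : List V, (∀ v ∈ l, v ∈ T.subtree u) ∧
      T.ValidSeq (fun w => σ w + if w = u then j else 0) l ∧
      T.LocalTerminal (T.fireList (fun w => σ w + if w = u then j else 0) l)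
        (T.subtree u) := exists_stab hu hσ
  have cond0 : ∃ l : List V, (∀ v ∈ l, v ∈ T.subtree u) ∧ T.ValidSeq σ l ∧
      T.LocalTerminal (T.fireList σ l) (T.subtree u) :=
    ⟨[], by simp, trivial, by simpa [fireList] using hσ⟩
  have hfσ : T.final σ u = σ := by
    unfold final
    rw [dif_pos cond0]
    have spec := cond0.choose_spec
    rw [validSeq_nil_of_terminal hσ spec.2.1 spec.1]
    rfl
  have hdelta : ∀ j : ℕ, T.delta σ u j = ((cond j).choose).count u := by
    intro j
    have spec := (cond j).choose_spec
    unfold delta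
    rw [hfσ]
    unfold final
    rw [dif_pos (cond j)]
    rw [fireList_at_parent hu spec.1]
    have he : (if T.parent u = u then j else 0) = 0 := if_neg hpne
    show σ (T.parent u) + (if T.parent u = u then j else 0) +
        ((cond j).choose).count u - σ (T.parent u) = ((cond j).choose).count u
    omega
  set lk := (cond k).choose with hlk
  set lk1 := (cond (k + 1)).choose with hlk1
  have speck := (cond k).choose_spec
  have speck1 := (cond (k + 1)).choose_spec
  -- lk is a valid sequence from the (k+1)-configuration
  obtain ⟨hvk2, heqk2⟩ := validSeq_add speck.2.1 (fun w => if w = u then 1 else 0)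
  have hvk2' : T.ValidSeq (fun w => σ w + if w = u then k + 1 else 0) lk := by
    rw [config_succ]; exact hvk2
  constructor
  · -- δ(k) ≤ δ(k+1) via least action
    have hle := lap (u := u) lk (fun w => σ w + if w = u then k + 1 else 0) lk1
      hvk2' speck.1 speck1.2.1 speck1.1 speck1.2.2
    have := Multiset.count_le_of_le u hle
    have h2 : ((cond k).choose).count u ≤ ((cond (k + 1)).choose).count u := by
      simpa using this
    rw [hdelta k, hdelta (k + 1)]
    exact h2
  · -- δ(k+1) ≤ δ(k) + 1
    obtain ⟨m, hmsub, hmval, hmterm, hmcnt⟩ :=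
      exists_stab_succ hu speck.1 speck.2.1 speck.2.2
    have hle := lap (u := u) lk1 (fun w => σ w + if w = u then k + 1 else 0) m
      speck1.2.1 speck1.1 hmval hmsub hmterm
    have := Multiset.count_le_of_le u hle
    have h2 : ((cond (k + 1)).choose).count u ≤ m.count u := by
      simpa using this
    have h3 : m.count u ≤ ((cond k).choose).count u + 1 := hmcnt
    rw [hdelta k, hdelta (k + 1)]
    omega
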